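/- arXiv:2010.04392 — 2 statements merged into one kernel-verified Lean document; each statement's English description precedes it below -/
import Mathlib

section
/- Let n ≥ 1. (1) For any α, β ∈ P_n there exist α', β' ∈ P_n such that αβ = α'β = αβ', Φ(α',β) = 0 and Φ(α,β') = 0. (2) For any α, β, γ ∈ P_n there exist α', γ' ∈ P_n such that αβγ = α'βγ' and Φ(α',β) + Φ(α'β,γ') = 0. -/
/-
A floating component of `Γ(α,β)` consists of middle vertices, i.e. of lower points of `α`.
Gluing all these points of `α` to the block of an upper point `i₀` attaches every floating
component to the component of `i₀`; this joins no two outer vertices that were not already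
connected, so `αβ` is unchanged, and no floating component survives. Gluing the corresponding
upper points of `β` to the block of `i₀'` does the same on the other side. For three factors,
apply this to `(α, β)` and then to `(α'β, γ)`.
-/
namespace TPM

/-- Vertex set `{1,…,n} ∪ {1',…,n'}`: `Sum.inl` = unprimed (upper row),
`Sum.inr` = primed (lower row). -/
abbrev V (n : ℕ) := Fin n ⊕ Fin n

/-- The partition monoid `P_n`: set partitions of the `2n`-element set `V n`,
encoded as equivalence relations (setoids). -/
abbrev PM (n : ℕ) := Setoid (V n)

/-- Three-row vertex set of the product graph: top / middle / bottom. -/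
abbrev W (n : ℕ) := Fin n ⊕ (Fin n ⊕ Fin n)

variable {n : ℕ}

/-- First factor: unprimed ↦ top, primed ↦ middle. -/
def topMid : V n → W n
  | Sum.inl i => Sum.inl i
  | Sum.inr i => Sum.inr (Sum.inl i)

/-- Second factor: unprimed ↦ middle, primed ↦ bottom. -/
def midBot : V n → W n
  | Sum.inl i => Sum.inr (Sum.inl i)
  | Sum.inr i => Sum.inr (Sum.inr i)

/-- Embedding of `V n` as top and bottom rows of the three-row set. -/
def topBot : V n → W n
  | Sum.inl i => Sum.inl i
  | Sum.inr i => Sum.inr (Sum.inr i)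

/-- Edge relation of the product graph `Γ(α,β)`. -/
def graphRel (α β : PM n) (x y : W n) : Prop :=
  (∃ u v : V n, α.r u v ∧ x = topMid u ∧ y = topMid v) ∨
  (∃ u v : V n, β.r u v ∧ x = midBot u ∧ y = midBot v)

/-- Connectivity (equivalence closure of the edge relation) in `Γ(α,β)`. -/
def conn (α β : PM n) : W n → W n → Prop := Relation.EqvGen (graphRel α β)

/-- Connectivity in `Γ(α,β)`, as a setoid on the three-row vertex set. -/
def connSetoid (α β : PM n) : Setoid (W n) :=
  ⟨conn α β, Relation.EqvGen.is_equivalence _⟩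

/-- The product of two partitions: `x,y` lie in the same block of `αβ` iff they are
connected in `Γ(α,β)`. -/
def pmul (α β : PM n) : PM n :=
  ⟨fun x y => conn α β (topBot x) (topBot y),
    ⟨fun _ => Relation.EqvGen.refl _, fun h => Relation.EqvGen.symm _ _ h, fun h h' => Relation.EqvGen.trans _ _ _ h h'⟩⟩

/-- A vertex of the three-row set lies in the middle row. -/
def isMid (x : W n) : Prop := ∃ i : Fin n, x = Sum.inr (Sum.inl i)

/-- `Φ(α,β)`: the number of floating components of `Γ(α,β)`, i.e. connected components
all of whose vertices lie in the middle row. -/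
noncomputable def Phi (α β : PM n) : ℕ :=
  Nat.card {c : Quotient (connSetoid α β) //
    ∀ x : W n, Quotient.mk (connSetoid α β) x = c → isMid x}

/-- The rank of a partition: the number of transversal blocks (blocks containing both an
unprimed and a primed element). -/
noncomputable def rnk (α : PM n) : ℕ :=
  Nat.card {c : Quotient α //
    (∃ i : Fin n, Quotient.mk α (Sum.inl i) = c) ∧ ∃ i : Fin n, Quotient.mk α (Sum.inr i) = c}

/-- Which row of `V n` a point lies in. -/
def side : V n → Bool
  | Sum.inl _ => true
  | Sum.inr _ => false

/-- `α̂`: split each transversal of `α` into its unprimed part and its primed part. -/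
def hat (α : PM n) : PM n :=
  ⟨fun x y => α.r x y ∧ side x = side y,
    ⟨fun x => ⟨α.iseqv.refl x, rfl⟩,
     fun h => ⟨α.iseqv.symm h.1, h.2.symm⟩,
     fun h h' => ⟨α.iseqv.trans h.1 h'.1, h.2.trans h'.2⟩⟩⟩

/-- The twisted product on `ℕ × P_n`:  `(i,α)(j,β) = (i + j + Φ(α,β), αβ)`. -/
noncomputable def tmul (a b : ℕ × PM n) : ℕ × PM n :=
  (a.1 + b.1 + Phi a.2 b.2, pmul a.2 b.2)

/-- A congruence on a set equipped with a binary operation: an equivalence relation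
compatible with the operation on both sides. -/
def IsCongruence {M : Type*} (mul : M → M → M) (σ : M → M → Prop) : Prop :=
  Equivalence σ ∧ ∀ x y a, σ x y → σ (mul a x) (mul a y) ∧ σ (mul x a) (mul y a)

/-- Green's relation `R`: equality of the right ideals `xM = yM`. -/
def greenR {M : Type*} (mul : M → M → M) (x y : M) : Prop :=
  Set.range (mul x) = Set.range (mul y)

/-- Green's relation `L`: `Mx = My`. -/
def greenL {M : Type*} (mul : M → M → M) (x y : M) : Prop :=
  Set.range (fun a => mul a x) = Set.range (fun a => mul a y)

/-- The principal two-sided ideal `MxM`. -/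
def jSet {M : Type*} (mul : M → M → M) (x : M) : Set M :=
  Set.range (fun p : M × M => mul (mul p.1 x) p.2)

/-- Green's relation `J`: `MxM = MyM`. -/
def greenJ {M : Type*} (mul : M → M → M) (x y : M) : Prop :=
  jSet mul x = jSet mul y

/-- Green's relation `H = R ∩ L`. -/
def greenH {M : Type*} (mul : M → M → M) (x y : M) : Prop :=
  greenR mul x y ∧ greenL mul x y

/-- Green's relation `D = R ∘ L`. -/
def greenD {M : Type*} (mul : M → M → M) (x y : M) : Prop :=
  ∃ z, greenR mul x z ∧ greenL mul z y

/-- `pd(α,β)` satisfies `P`, where `α` has `p` transversals: there are representatives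
`a s` of the upper parts of the `p` (pairwise distinct) transversals of `α`, with `b s`
representing the corresponding lower parts, and a permutation `π` with `P π` such that the
block of `β` containing `a s` contains `b (π s)`.  (For H-related `α, β ∈ D_p` this says
exactly that some representation of the permutational difference `pd(α,β)` satisfies `P`.) -/
def pdIn (p : ℕ) (P : Equiv.Perm (Fin p) → Prop) (α β : PM n) : Prop :=
  ∃ (a b : Fin p → Fin n) (π : Equiv.Perm (Fin p)),
    (∀ s t, α.r (Sum.inl (a s)) (Sum.inl (a t)) → s = t) ∧
    (∀ s, α.r (Sum.inl (a s)) (Sum.inr (b s))) ∧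
    (∀ s, β.r (Sum.inl (a s)) (Sum.inr (b (π s)))) ∧
    P π

/-- The relation `ν_N` on `D_p`, for a subgroup `N ≤ S_p`:  H-related pairs of rank-`p`
partitions whose permutational difference lies in `N`. -/
def nuRel (p : ℕ) (N : Subgroup (Equiv.Perm (Fin p))) (α β : PM n) : Prop :=
  rnk α = p ∧ rnk β = p ∧ greenH pmul α β ∧ pdIn p (· ∈ N) α β

/-- The congruence `(m, m+d)^♯` on the additive monoid `ℕ` (intended for `d ≥ 1`). -/
def natCong (m d : ℕ) (i j : ℕ) : Prop :=
  i = j ∨ (m ≤ i ∧ m ≤ j ∧ i % d = j % d)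

/-- `min θ ≤ i` for a congruence `θ` on `ℕ` (with `min Δ_ℕ = ∞`). -/
def minLE (θ : ℕ → ℕ → Prop) (i : ℕ) : Prop :=
  ∃ a b, θ a b ∧ a ≠ b ∧ a ≤ i

/-- `k ≤ min θ` for a congruence `θ` on `ℕ` (with `min Δ_ℕ = ∞`). -/
def leMin (k : ℕ) (θ : ℕ → ℕ → Prop) : Prop :=
  ∀ a b, θ a b → a ≠ b → k ≤ a

/-- The possible entries of a C-matrix. -/
inductive CEntry : Type
  | delta | muUp | muDown | mu | lam | rho | R
  | nsym (q : ℕ) (N : Subgroup (Equiv.Perm (Fin q)))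

/-- Whether a C-matrix entry is an N-symbol. -/
def isNsym : CEntry → Prop
  | CEntry.nsym _ _ => True
  | _ => False

/-- The allowed values of the symbol `ζ` in row types RT2, RT5, RT6. -/
def isZeta (e : CEntry) : Prop :=
  e = CEntry.mu ∨ e = CEntry.muUp ∨ e = CEntry.muDown ∨ e = CEntry.delta

/-- The allowed values of the symbol `ξ` in row types RT4–RT7: any of `μ,ρ,λ,R` if
`d = 1`, and only `μ` if `d > 1`. -/
def xiOK (d : ℕ) (e : CEntry) : Prop :=
  e = CEntry.mu ∨ (d = 1 ∧ (e = CEntry.rho ∨ e = CEntry.lam ∨ e = CEntry.R))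

/-- Row type RT1 for rows 0 and 1: all entries `Δ`. -/
def RT1 (M0 M1 : ℕ → CEntry) : Prop :=
  (∀ i, M0 i = CEntry.delta) ∧ (∀ i, M1 i = CEntry.delta)

/-- Row type RT2. -/
def RT2 (Θ0 Θ1 : ℕ → ℕ → Prop) (M0 M1 : ℕ → CEntry) : Prop :=
  Θ0 = Eq ∧ Θ1 = Eq ∧
  ∃ i ζ, isZeta ζ ∧
    (∀ j, j < i → M0 j = CEntry.delta) ∧ (∀ j, i ≤ j → M0 j = CEntry.mu) ∧
    (∀ j, j < i → M1 j = CEntry.delta) ∧ M1 i = ζ ∧ (∀ j, i < j → M1 j = CEntry.mu)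

/-- Row type RT3. -/
def RT3 (Θ0 : ℕ → ℕ → Prop) (M0 M1 : ℕ → CEntry) : Prop :=
  ∃ m ξ, Θ0 = natCong m 1 ∧ (ξ = CEntry.rho ∨ ξ = CEntry.lam ∨ ξ = CEntry.R) ∧
    (∀ i, M1 i = CEntry.delta) ∧
    (∀ j, j < m → M0 j = CEntry.delta) ∧ (∀ j, m ≤ j → M0 j = ξ)

/-- Row type RT4. -/
def RT4 (Θ0 Θ1 : ℕ → ℕ → Prop) (M0 M1 : ℕ → CEntry) : Prop :=
  ∃ m d ξ, 1 ≤ d ∧ Θ0 = natCong m d ∧ Θ1 = natCong m d ∧ xiOK d ξ ∧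
    (∀ j, j < m → M0 j = CEntry.delta ∧ M1 j = CEntry.delta) ∧
    (∀ j, m ≤ j → M0 j = ξ ∧ M1 j = ξ)

/-- Row type RT5. -/
def RT5 (Θ0 Θ1 : ℕ → ℕ → Prop) (M0 M1 : ℕ → CEntry) : Prop :=
  ∃ m d i ξ ζ, 1 ≤ d ∧ i < m ∧ Θ0 = natCong m d ∧ Θ1 = natCong (m + 1) d ∧
    xiOK d ξ ∧ isZeta ζ ∧
    (∀ j, j < i → M0 j = CEntry.delta) ∧ (∀ j, i ≤ j → j < m → M0 j = CEntry.mu) ∧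
    (∀ j, m ≤ j → M0 j = ξ) ∧
    (∀ j, j < i → M1 j = CEntry.delta) ∧ M1 i = ζ ∧
    (∀ j, i < j → j ≤ m → M1 j = CEntry.mu) ∧ (∀ j, m < j → M1 j = ξ)

/-- Row type RT6. -/
def RT6 (Θ0 Θ1 : ℕ → ℕ → Prop) (M0 M1 : ℕ → CEntry) : Prop :=
  ∃ m l d ξ ζ, 1 ≤ d ∧ m < l ∧ Θ0 = natCong m d ∧ Θ1 = natCong l d ∧
    xiOK d ξ ∧ isZeta ζ ∧
    (∀ j, j < m → M0 j = CEntry.delta) ∧ (∀ j, m ≤ j → M0 j = ξ) ∧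
    (∀ j, j < l - 1 → M1 j = CEntry.delta) ∧ M1 (l - 1) = ζ ∧ (∀ j, l ≤ j → M1 j = ξ)

/-- Row type RT7. -/
def RT7 (Θ0 Θ1 : ℕ → ℕ → Prop) (M0 M1 : ℕ → CEntry) : Prop :=
  ∃ m l d ξ, 1 ≤ d ∧ 0 < m ∧ m + 1 < l ∧ (l - 1) % d = m % d ∧
    Θ0 = natCong m d ∧ Θ1 = natCong l d ∧ xiOK d ξ ∧
    (∀ j, j < m - 1 → M0 j = CEntry.delta) ∧ M0 (m - 1) = CEntry.mu ∧
    (∀ j, m ≤ j → M0 j = ξ) ∧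
    (∀ j, j < l - 1 → M1 j = CEntry.delta) ∧ M1 (l - 1) = CEntry.mu ∧
    (∀ j, l ≤ j → M1 j = ξ)

/-- Row type RT8 for a row `q ≥ 2`: all entries `Δ`. -/
def RT8 (Mq : ℕ → CEntry) : Prop := ∀ i, Mq i = CEntry.delta

/-- Row type RT9 for a row `q ≥ 2`. -/
def RT9 (q : ℕ) (Θq : ℕ → ℕ → Prop) (Mq : ℕ → CEntry) : Prop :=
  ∃ (i k : ℕ) (Ns : ℕ → Subgroup (Equiv.Perm (Fin q))),
    i ≤ k ∧ leMin k Θq ∧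
    (∀ j, i ≤ j → j ≤ k → Ns j ≠ ⊥ ∧ (Ns j).Normal) ∧
    (∀ j j', i ≤ j → j ≤ j' → j' ≤ k → Ns j ≤ Ns j') ∧
    (∀ j, j < i → Mq j = CEntry.delta) ∧
    (∀ j, i ≤ j → j < k → Mq j = CEntry.nsym q (Ns j)) ∧
    (∀ j, k ≤ j → Mq j = CEntry.nsym q (Ns k))

/-- Row type RT10 for a row `q ≥ 2`. -/
def RT10 (q : ℕ) (Θq : ℕ → ℕ → Prop) (Mq : ℕ → CEntry) : Prop :=
  ∃ (i m : ℕ) (Ns : ℕ → Subgroup (Equiv.Perm (Fin q))),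
    i ≤ m ∧ Θq = natCong m 1 ∧
    (∀ j, i ≤ j → j < m → Ns j ≠ ⊥ ∧ (Ns j).Normal) ∧
    (∀ j j', i ≤ j → j ≤ j' → j' < m → Ns j ≤ Ns j') ∧
    (∀ j, j < i → Mq j = CEntry.delta) ∧
    (∀ j, i ≤ j → j < m → Mq j = CEntry.nsym q (Ns j)) ∧
    (∀ j, m ≤ j → Mq j = CEntry.R)

/-- A C-pair for `P_n^Φ`: a descending chain `Θ = (θ_0 ⊇ ⋯ ⊇ θ_n)` of congruences on
`(ℕ,+)` together with a matrix `M = (M_{qi})`, `0 ≤ q ≤ n`, `i ∈ ℕ`, whose rows 0 and 1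
jointly have one of the types RT1–RT7, whose rows `q ≥ 2` have one of the types RT8–RT10,
and which satisfies the verticality conditions (V1) and (V2). -/
def IsCPair (n : ℕ) (Θ : ℕ → ℕ → ℕ → Prop) (M : ℕ → ℕ → CEntry) : Prop :=
  (∀ q, q ≤ n → IsCongruence (· + ·) (Θ q)) ∧
  (∀ q r, q ≤ r → r ≤ n → ∀ i j, Θ r i j → Θ q i j) ∧
  (RT1 (M 0) (M 1) ∨ RT2 (Θ 0) (Θ 1) (M 0) (M 1) ∨ RT3 (Θ 0) (M 0) (M 1) ∨
    RT4 (Θ 0) (Θ 1) (M 0) (M 1) ∨ RT5 (Θ 0) (Θ 1) (M 0) (M 1) ∨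
    RT6 (Θ 0) (Θ 1) (M 0) (M 1) ∨ RT7 (Θ 0) (Θ 1) (M 0) (M 1)) ∧
  (∀ q, 2 ≤ q → q ≤ n → (RT8 (M q) ∨ RT9 q (Θ q) (M q) ∨ RT10 q (Θ q) (M q))) ∧
  (∀ q i, 1 ≤ q → q ≤ n → isNsym (M q i) →
    ¬(M (q - 1) i = CEntry.delta ∨ M (q - 1) i = CEntry.muUp ∨
      M (q - 1) i = CEntry.muDown ∨ isNsym (M (q - 1) i))) ∧
  (∀ q i, 2 ≤ q → q ≤ n → M q i = CEntry.R → M (q - 1) i = CEntry.R)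

/-- The relation `cg(Θ,M)` on `P_n^Φ` associated with a C-pair `(Θ,M)`: conditions
(C1)–(C8). -/
def cg (n : ℕ) (Θ : ℕ → ℕ → ℕ → Prop) (M : ℕ → ℕ → CEntry)
    (a b : ℕ × PM n) : Prop :=
  -- (C1)
  (M (rnk a.2) a.1 = CEntry.delta ∧ M (rnk b.2) b.1 = CEntry.delta ∧
    Θ (rnk a.2) a.1 b.1 ∧ a.2 = b.2) ∨
  -- (C2)
  (M (rnk a.2) a.1 = CEntry.R ∧ M (rnk b.2) b.1 = CEntry.R) ∨
  -- (C3)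
  (∃ p N, M (rnk a.2) a.1 = CEntry.nsym p N ∧ M (rnk b.2) b.1 = CEntry.nsym p N ∧
    Θ (rnk a.2) a.1 b.1 ∧ rnk a.2 = p ∧ greenH pmul a.2 b.2 ∧ pdIn p (· ∈ N) a.2 b.2) ∨
  -- (C4)
  (M (rnk a.2) a.1 = CEntry.lam ∧ M (rnk b.2) b.1 = CEntry.lam ∧
    greenL pmul (hat a.2) (hat b.2)) ∨
  -- (C5)
  (M (rnk a.2) a.1 = CEntry.rho ∧ M (rnk b.2) b.1 = CEntry.rho ∧
    greenR pmul (hat a.2) (hat b.2)) ∨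
  -- (C6)
  (M (rnk a.2) a.1 = CEntry.muDown ∧ M (rnk b.2) b.1 = CEntry.muDown ∧
    hat a.2 = hat b.2 ∧ greenL pmul a.2 b.2) ∨
  -- (C7)
  (M (rnk a.2) a.1 = CEntry.muUp ∧ M (rnk b.2) b.1 = CEntry.muUp ∧
    hat a.2 = hat b.2 ∧ greenR pmul a.2 b.2) ∨
  -- (C8)
  (M (rnk a.2) a.1 = CEntry.mu ∧ M (rnk b.2) b.1 = CEntry.mu ∧
    hat a.2 = hat b.2 ∧
    ((rnk a.2 = rnk b.2 ∧ Θ (rnk a.2) a.1 b.1) ∨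
     (rnk a.2 ≠ rnk b.2 ∧ Θ 0 (a.1 + rnk b.2) (b.1 + rnk a.2) ∧
        ¬ minLE (Θ (rnk a.2)) a.1 ∧ ¬ minLE (Θ (rnk b.2)) b.1) ∨
     (rnk a.2 ≠ rnk b.2 ∧ Θ 0 (a.1 + rnk b.2) (b.1 + rnk a.2) ∧
        minLE (Θ (rnk a.2)) a.1 ∧ minLE (Θ (rnk b.2)) b.1)))

/-- The C-pair `(Θ,M)` is exceptional with exceptional row `q`, where
`θ_q = (m, m+2d)^♯`. -/
def ExcAt (n : ℕ) (Θ : ℕ → ℕ → ℕ → Prop) (M : ℕ → ℕ → CEntry) (q m d : ℕ) : Prop :=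
  2 ≤ q ∧ q ≤ n ∧ 1 ≤ d ∧ Θ q = natCong m (2 * d) ∧
  ((2 < q ∧ M q m = CEntry.nsym q (alternatingGroup (Fin q))) ∨
   (q = 2 ∧ M 2 m = CEntry.delta ∧
     (M 1 m = CEntry.mu ∨ M 1 m = CEntry.rho ∨ M 1 m = CEntry.lam ∨ M 1 m = CEntry.R) ∧
     (∀ i j, natCong m d i j → Θ 1 i j)))

/-- The exceptional congruence `cgx(Θ,M)` associated with an exceptional C-pair:
`cg(Θ,M)` together with the pairs of (C9). -/
def cgx (n : ℕ) (Θ : ℕ → ℕ → ℕ → Prop) (M : ℕ → ℕ → CEntry) (q m d : ℕ)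
    (a b : ℕ × PM n) : Prop :=
  cg n Θ M a b ∨
  (rnk a.2 = q ∧ rnk b.2 = q ∧ natCong m d a.1 b.1 ∧ ¬ Θ q a.1 b.1 ∧
    greenH pmul a.2 b.2 ∧ pdIn q (fun π => π ∉ alternatingGroup (Fin q)) a.2 b.2)

/-- The Rees relation of a subset `I`. -/
def rees {M : Type*} (I : Set M) (x y : M) : Prop := x = y ∨ (x ∈ I ∧ y ∈ I)

/-- A (possibly empty) ideal of `P_n^Φ`: `MIM ⊆ I`. -/
def tIdeal (n : ℕ) (I : Set (ℕ × PM n)) : Prop :=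
  ∀ a b x, x ∈ I → tmul (tmul a x) b ∈ I

/-- `I(σ)`: the union of all ideals `I` of `P_n^Φ` whose Rees congruence is contained
in `σ`. -/
def Isig (n : ℕ) (σ : (ℕ × PM n) → (ℕ × PM n) → Prop) : Set (ℕ × PM n) :=
  ⋃₀ {I | tIdeal n I ∧ ∀ x y, rees I x y → σ x y}

/-- The 0-twisted partition monoid `P_{n,0}^Φ`, carried by `Option (P_n)` with
`none` the zero element `✗`. -/
noncomputable def mul0 (a b : Option (PM n)) : Option (PM n) :=
  match a, b with
  | some α, some β => if Phi α β = 0 then some (pmul α β) else none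
  | _, _ => none

/-- `rank a ≤ q`, where `rank ✗ = -∞`. -/
def rnkLE (a : Option (PM n)) (q : ℕ) : Prop :=
  ∀ α, a = some α → rnk α ≤ q

/-- The Rees congruence `R_q` on `P_{n,0}^Φ`. -/
def ReesQ (q : ℕ) (a b : Option (PM n)) : Prop :=
  a = b ∨ (rnkLE a q ∧ rnkLE b q)

/-- Lift a relation on `P_n` to `P_{n,0}^Φ = P_n ∪ {✗}`. -/
def lift2 (r : PM n → PM n → Prop) (a b : Option (PM n)) : Prop :=
  ∃ α β, a = some α ∧ b = some β ∧ r α β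

end TPM

namespace Setoid

variable {X : Type*} {r t : Setoid X} {s : Set X} {x y : X}

def glue (r : Setoid X) (s : Set X) : Setoid X :=
  Relation.EqvGen.setoid fun x y => r x y ∨ (x ∈ s ∧ y ∈ s)

theorem le_glue : r ≤ r.glue s :=
  fun _ _ h => Relation.EqvGen.rel _ _ (Or.inl h)

theorem glue_rel_of_mem (hx : x ∈ s) (hy : y ∈ s) : r.glue s x y :=
  Relation.EqvGen.rel _ _ (Or.inr ⟨hx, hy⟩)

theorem glue_le (hr : r ≤ t) (hs : ∀ x ∈ s, ∀ y ∈ s, t x y) : r.glue s ≤ t :=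
  eqvGen_le fun _ _ h => h.elim (fun h => hr h) fun h => hs _ h.1 _ h.2

theorem glue_rel_iff (hs : ∀ x y, r x y → x ∈ s → y ∈ s) :
    r.glue s x y ↔ r x y ∨ (x ∈ s ∧ y ∈ s) := by
  refine ⟨fun h => ?_, fun h => h.elim (fun h => le_glue h) fun h => glue_rel_of_mem h.1 h.2⟩
  let u : Setoid X :=
    { r := fun x y => r x y ∨ (x ∈ s ∧ y ∈ s)
      iseqv :=
        { refl := fun x => Or.inl (r.refl' x)
          symm := fun h => h.imp r.symm' And.symm
          trans := by
            rintro x y z (hxy | ⟨hx, hy⟩) (hyz | ⟨hy', hz⟩)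
            · exact Or.inl (r.trans' hxy hyz)
            · exact Or.inr ⟨hs _ _ (r.symm' hxy) hy', hz⟩
            · exact Or.inr ⟨hx, hs _ _ hyz hy⟩
            · exact Or.inr ⟨hx, hz⟩ } }
  exact glue_le (t := u) (fun _ _ => Or.inl) (fun _ hx _ hy => Or.inr ⟨hx, hy⟩) h

end Setoid

namespace TPM

variable {n : ℕ} {α β α' β' : PM n}

theorem conn_topMid {u v : V n} (h : α u v) : conn α β (topMid u) (topMid v) :=
  Relation.EqvGen.rel _ _ (Or.inl ⟨u, v, h, rfl, rfl⟩)

theorem conn_midBot {u v : V n} (h : β u v) : conn α β (midBot u) (midBot v) :=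
  Relation.EqvGen.rel _ _ (Or.inr ⟨u, v, h, rfl, rfl⟩)

theorem conn_mono (hα : α ≤ α') (hβ : β ≤ β') {x y : W n} (h : conn α β x y) :
    conn α' β' x y := by
  refine Relation.EqvGen.mono (fun a b hab => ?_) _ _ h
  rcases hab with ⟨u, v, huv, rfl, rfl⟩ | ⟨u, v, huv, rfl, rfl⟩
  · exact Or.inl ⟨u, v, hα huv, rfl, rfl⟩
  · exact Or.inr ⟨u, v, hβ huv, rfl, rfl⟩

theorem connSetoid_le {t : Setoid (W n)} (hα : α ≤ t.comap topMid) (hβ : β ≤ t.comap midBot) :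
    connSetoid α β ≤ t := by
  refine Setoid.eqvGen_le fun x y h => ?_
  rcases h with ⟨u, v, huv, rfl, rfl⟩ | ⟨u, v, huv, rfl, rfl⟩
  · exact hα huv
  · exact hβ huv

def IsFloating (α β : PM n) (w : W n) : Prop :=
  ∀ z, conn α β w z → isMid z

theorem IsFloating.isMid {w : W n} (h : IsFloating α β w) : isMid w :=
  h w (Relation.EqvGen.refl w)

theorem not_isMid_topBot (x : V n) : ¬ isMid (topBot x) := by
  cases x <;> simp [topBot, isMid]

/-- An outer vertex is never floating, so two outer vertices glued here were already connected
through `a`. -/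
theorem pmul_eq_of_connSetoid_le_glue (a : W n) (hα : α ≤ α') (hβ : β ≤ β')
    (h : connSetoid α' β' ≤ (connSetoid α β).glue {w | conn α β w a ∨ IsFloating α β w}) :
    pmul α' β' = pmul α β := by
  set H := {w | conn α β w a ∨ IsFloating α β w}
  have saturated : ∀ w w', conn α β w w' → w ∈ H → w' ∈ H := by
    rintro w w' hww' (hw | hw)
    · exact Or.inl (.trans _ _ _ (.symm _ _ hww') hw)
    · exact Or.inr fun z hz => hw z (.trans _ _ _ hww' hz)
  have linked : ∀ x : V n, topBot x ∈ H → conn α β (topBot x) a :=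
    fun x hx => hx.resolve_right fun hf => not_isMid_topBot x hf.isMid
  ext x y
  refine ⟨fun hxy => ?_, conn_mono hα hβ⟩
  rcases (Setoid.glue_rel_iff saturated).1 (h hxy) with hxy | ⟨hx, hy⟩
  · exact hxy
  · exact .trans _ _ _ (linked x hx) (.symm _ _ (linked y hy))

theorem Phi_eq_zero_of_isFloating (hα : α ≤ α') (hβ : β ≤ β')
    (h : ∀ w, IsFloating α β w → ∃ x, ¬ isMid x ∧ conn α' β' w x) : Phi α' β' = 0 := by
  refine Nat.card_eq_zero.2 (Or.inl ⟨fun ⟨c, hc⟩ => ?_⟩)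
  obtain ⟨w, rfl⟩ := Quotient.exists_rep c
  obtain ⟨x, hx, hwx⟩ : ∃ x, ¬ isMid x ∧ conn α' β' w x := by
    by_cases hw : IsFloating α β w
    · exact h w hw
    · obtain ⟨z, hwz, hz⟩ : ∃ z, conn α β w z ∧ ¬ isMid z := by
        simpa only [IsFloating, not_forall, exists_prop] using hw
      exact ⟨z, hz, conn_mono hα hβ hwz⟩
  exact hx (hc x (Quotient.sound (Relation.EqvGen.symm _ _ hwx)))

theorem conn_or_isFloating_of_mem_insert {f : V n → W n} {a v : V n}
    (hv : v ∈ insert a {v | IsFloating α β (f v)}) :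
    conn α β (f v) (f a) ∨ IsFloating α β (f v) := by
  rcases hv with rfl | hv
  · exact Or.inl (.refl _)
  · exact Or.inr hv

def absorbLeft (α β : PM n) (i₀ : Fin n) : PM n :=
  α.glue (insert (Sum.inl i₀) {v | IsFloating α β (topMid v)})

def absorbRight (α β : PM n) (i₀ : Fin n) : PM n :=
  β.glue (insert (Sum.inr i₀) {v | IsFloating α β (midBot v)})

theorem pmul_absorbLeft (i₀ : Fin n) : pmul (absorbLeft α β i₀) β = pmul α β := by
  refine pmul_eq_of_connSetoid_le_glue (topMid (Sum.inl i₀)) Setoid.le_glue le_rfl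
    (connSetoid_le (Setoid.glue_le (fun _ _ h => Setoid.le_glue (conn_topMid h)) ?_)
      fun _ _ h => Setoid.le_glue (conn_midBot h))
  exact fun u hu v hv => Setoid.glue_rel_of_mem (conn_or_isFloating_of_mem_insert hu)
    (conn_or_isFloating_of_mem_insert hv)

theorem pmul_absorbRight (i₀ : Fin n) : pmul α (absorbRight α β i₀) = pmul α β := by
  refine pmul_eq_of_connSetoid_le_glue (midBot (Sum.inr i₀)) le_rfl Setoid.le_glue
    (connSetoid_le (fun _ _ h => Setoid.le_glue (conn_topMid h))
      (Setoid.glue_le (fun _ _ h => Setoid.le_glue (conn_midBot h)) ?_))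
  exact fun u hu v hv => Setoid.glue_rel_of_mem (conn_or_isFloating_of_mem_insert hu)
    (conn_or_isFloating_of_mem_insert hv)

theorem Phi_absorbLeft (i₀ : Fin n) : Phi (absorbLeft α β i₀) β = 0 := by
  refine Phi_eq_zero_of_isFloating Setoid.le_glue le_rfl fun w hw => ?_
  obtain ⟨i, rfl⟩ := hw.isMid
  refine ⟨Sum.inl i₀, by simp [isMid], conn_topMid (u := Sum.inr i) (v := Sum.inl i₀) ?_⟩
  exact Setoid.glue_rel_of_mem (Or.inr hw) (Or.inl rfl)

theorem Phi_absorbRight (i₀ : Fin n) : Phi α (absorbRight α β i₀) = 0 := by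
  refine Phi_eq_zero_of_isFloating le_rfl Setoid.le_glue fun w hw => ?_
  obtain ⟨i, rfl⟩ := hw.isMid
  refine ⟨Sum.inr (Sum.inr i₀), by simp [isMid], conn_midBot (u := Sum.inl i) (v := Sum.inr i₀) ?_⟩
  exact Setoid.glue_rel_of_mem (Or.inr hw) (Or.inl rfl)

/-- (1) For all `α, β ∈ P_n` there are `α', β'` with
`αβ = α'β = αβ'`, `Φ(α',β) = 0` and `Φ(α,β') = 0`.  (2) For all `α, β, γ ∈ P_n` there
are `α', γ'` with `αβγ = α'βγ'` and `Φ(α',β) + Φ(α'β,γ') = 0`. -/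
theorem avoid_floating (n : ℕ) (hn : 1 ≤ n) :
    (∀ α β : PM n, ∃ α' β' : PM n,
      pmul α β = pmul α' β ∧ pmul α β = pmul α β' ∧ Phi α' β = 0 ∧ Phi α β' = 0) ∧
    (∀ α β γ : PM n, ∃ α' γ' : PM n,
      pmul (pmul α β) γ = pmul (pmul α' β) γ' ∧ Phi α' β + Phi (pmul α' β) γ' = 0) := by
  let i₀ : Fin n := ⟨0, hn⟩
  refine ⟨fun α β => ⟨absorbLeft α β i₀, absorbRight α β i₀, (pmul_absorbLeft i₀).symm,
    (pmul_absorbRight i₀).symm, Phi_absorbLeft i₀, Phi_absorbRight i₀⟩, fun α β γ => ?_⟩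
  refine ⟨absorbLeft α β i₀, absorbRight (pmul α β) γ i₀, ?_, ?_⟩
  · rw [pmul_absorbLeft, pmul_absorbRight]
  · rw [pmul_absorbLeft, Phi_absorbLeft, Phi_absorbRight]

end TPM
end

section
/- Let n ≥ 1 and α, β ∈ D_1 in P_n. (1) If ker α ≠ ker β, then there exists γ ∈ P_n such that rank(γα) ≠ rank(γβ) and Φ(γ,α) = Φ(γ,β) = 0. (2) If coker α ≠ coker β, then there exists γ ∈ P_n such that rank(αγ) ≠ rank(βγ) and Φ(α,γ) = Φ(β,γ) = 0. -/
namespace TPM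

variable {n : ℕ}

section Statement10

variable {n : ℕ}

private lemma notMid_top (i : Fin n) : ¬ isMid (Sum.inl i : W n) := by
  rintro ⟨j, h⟩; exact absurd h (by simp)

private lemma notMid_bot (i : Fin n) : ¬ isMid (Sum.inr (Sum.inr i) : W n) := by
  rintro ⟨j, h⟩; simp at h

private lemma edge_first (γ δ : PM n) {u v : V n} (h : γ.r u v) :
    graphRel γ δ (topMid u) (topMid v) := Or.inl ⟨u, v, h, rfl, rfl⟩

private lemma edge_second (γ δ : PM n) {u v : V n} (h : δ.r u v) :
    graphRel γ δ (midBot u) (midBot v) := Or.inr ⟨u, v, h, rfl, rfl⟩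

private lemma conn_inv (γ δ : PM n) (h : W n → Prop)
    (hh : ∀ x y, graphRel γ δ x y → (h x ↔ h y)) :
    ∀ x y, conn γ δ x y → (h x ↔ h y) := by
  intro x y hc
  induction hc with
  | rel _ _ e => exact hh _ _ e
  | refl _ => exact Iff.rfl
  | symm _ _ _ ih => exact ih.symm
  | trans _ _ _ _ _ ih1 ih2 => exact ih1.trans ih2

private lemma rnk_eq_zero (δ : PM n)
    (h : ∀ i j : Fin n, ¬ δ.r (Sum.inl i) (Sum.inr j)) : rnk δ = 0 := by
  have : IsEmpty {c : Quotient δ //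
      (∃ i : Fin n, Quotient.mk δ (Sum.inl i) = c) ∧
      ∃ i : Fin n, Quotient.mk δ (Sum.inr i) = c} := by
    constructor
    rintro ⟨c, ⟨i, hi⟩, ⟨j, hj⟩⟩
    exact h i j (Quotient.exact (hi.trans hj.symm))
  exact Nat.card_of_isEmpty

private lemma rnk_eq_one_top (δ : PM n) (i₀ j₀ : Fin n)
    (h₀ : δ.r (Sum.inl i₀) (Sum.inr j₀))
    (huniq : ∀ i i' : Fin n, δ.r (Sum.inl i) (Sum.inl i')) : rnk δ = 1 := by
  apply Nat.card_eq_one_iff_unique.mpr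
  refine ⟨⟨?_⟩, ⟨⟨Quotient.mk δ (Sum.inl i₀), ⟨i₀, rfl⟩,
      ⟨j₀, Quotient.sound (δ.iseqv.symm h₀)⟩⟩⟩⟩
  rintro ⟨c, ⟨i, hi⟩, -⟩ ⟨c', ⟨i', hi'⟩, -⟩
  exact Subtype.ext (show c = c' by rw [← hi, ← hi']; exact Quotient.sound (huniq i i'))

private lemma rnk_eq_one_bot (δ : PM n) (i₀ j₀ : Fin n)
    (h₀ : δ.r (Sum.inl i₀) (Sum.inr j₀))
    (huniq : ∀ j j' : Fin n, δ.r (Sum.inr j) (Sum.inr j')) : rnk δ = 1 := by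
  apply Nat.card_eq_one_iff_unique.mpr
  refine ⟨⟨?_⟩, ⟨⟨Quotient.mk δ (Sum.inl i₀), ⟨i₀, rfl⟩,
      ⟨j₀, Quotient.sound (δ.iseqv.symm h₀)⟩⟩⟩⟩
  rintro ⟨c, -, ⟨j, hj⟩⟩ ⟨c', -, ⟨j', hj'⟩⟩
  exact Subtype.ext (show c = c' by rw [← hj, ← hj']; exact Quotient.sound (huniq j j'))

private lemma Phi_eq_zero (γ δ : PM n)
    (h : ∀ z : Fin n, ∃ w : W n, ¬ isMid w ∧ conn γ δ (Sum.inr (Sum.inl z)) w) :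
    Phi γ δ = 0 := by
  have : IsEmpty {c : Quotient (connSetoid γ δ) //
      ∀ x : W n, Quotient.mk (connSetoid γ δ) x = c → isMid x} := by
    constructor
    rintro ⟨c, hc⟩
    obtain ⟨x, hx⟩ := c.exists_rep
    obtain ⟨z, rfl⟩ := hc x hx
    obtain ⟨w, hw, hconn⟩ := h z
    refine hw (hc w ?_)
    rw [← hx]
    exact Quotient.sound ((connSetoid γ δ).iseqv.symm hconn)
  exact Nat.card_of_isEmpty

private lemma exists_transversal (δ : PM n) (h : rnk δ = 1) :
    ∃ a j : Fin n, δ.r (Sum.inl a) (Sum.inr j) := by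
  obtain ⟨-, ⟨⟨c, ⟨i, hi⟩, ⟨j, hj⟩⟩⟩⟩ := Nat.card_eq_one_iff_unique.mp h
  exact ⟨i, j, Quotient.exact (hi.trans hj.symm)⟩

private lemma transversal_unique (δ : PM n) (h : rnk δ = 1) {z w jz jw : Fin n}
    (h1 : δ.r (Sum.inl z) (Sum.inr jz)) (h2 : δ.r (Sum.inl w) (Sum.inr jw)) :
    δ.r (Sum.inl z) (Sum.inl w) := by
  obtain ⟨hs, -⟩ := Nat.card_eq_one_iff_unique.mp h
  have e := @Subsingleton.elim _ hs
    (⟨Quotient.mk δ (Sum.inl z), ⟨z, rfl⟩, ⟨jz, Quotient.sound (δ.iseqv.symm h1)⟩⟩ :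
      {c : Quotient δ // (∃ i : Fin n, Quotient.mk δ (Sum.inl i) = c) ∧
        ∃ i : Fin n, Quotient.mk δ (Sum.inr i) = c})
    ⟨Quotient.mk δ (Sum.inl w), ⟨w, rfl⟩, ⟨jw, Quotient.sound (δ.iseqv.symm h2)⟩⟩
  exact Quotient.exact (congrArg Subtype.val e)

/-- Classifier for the left-multiplier partition. -/
private def gmapL (U : Set (Fin n)) : V n → Prop
  | Sum.inl _ => False
  | Sum.inr z => z ∈ U

private def gammaL (U : Set (Fin n)) : PM n :=
  ⟨fun u v => gmapL U u ↔ gmapL U v,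
   ⟨fun _ => Iff.rfl, Iff.symm, Iff.trans⟩⟩

private def gmapR (U : Set (Fin n)) : V n → Prop
  | Sum.inl z => z ∈ U
  | Sum.inr _ => False

private def gammaR (U : Set (Fin n)) : PM n :=
  ⟨fun u v => gmapR U u ↔ gmapR U v,
   ⟨fun _ => Iff.rfl, Iff.symm, Iff.trans⟩⟩

private def hInvL (U : Set (Fin n)) : W n → Prop
  | Sum.inl _ => False
  | Sum.inr (Sum.inl z) => z ∈ U
  | Sum.inr (Sum.inr _) => True

private def hInvR (U : Set (Fin n)) : W n → Prop
  | Sum.inl _ => True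
  | Sum.inr (Sum.inl z) => z ∈ U
  | Sum.inr (Sum.inr _) => False

/-- Case L1: `U` is `ker δ`-saturated and contains the domain class. -/
private lemma left_sat (U : Set (Fin n)) (δ : PM n)
    (hsat : ∀ z w, δ.r (Sum.inl z) (Sum.inl w) → (z ∈ U ↔ w ∈ U))
    (hdom : ∀ z j, δ.r (Sum.inl z) (Sum.inr j) → z ∈ U)
    (hA : ∃ a j : Fin n, δ.r (Sum.inl a) (Sum.inr j)) :
    rnk (pmul (gammaL U) δ) = 0 ∧ Phi (gammaL U) δ = 0 := by
  have hinv : ∀ x y, graphRel (gammaL U) δ x y → (hInvL U x ↔ hInvL U y) := by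
    rintro x y (⟨u, v, hr, rfl, rfl⟩ | ⟨u, v, hr, rfl, rfl⟩)
    · rcases u with i | z <;> rcases v with i' | z' <;>
        first | exact Iff.rfl | exact hr
    · rcases u with z | j <;> rcases v with z' | j'
      · exact hsat z z' hr
      · exact iff_of_true (hdom z j' hr) trivial
      · exact iff_of_true trivial (hdom z' j (δ.iseqv.symm hr))
      · exact Iff.rfl
  constructor
  · apply rnk_eq_zero
    intro i j hc
    exact (conn_inv (gammaL U) δ (hInvL U) hinv _ _ hc).mpr trivial
  · apply Phi_eq_zero
    intro z
    by_cases hz : z ∈ U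
    · obtain ⟨a, j, ha⟩ := hA
      have haU : a ∈ U := hdom a j ha
      refine ⟨Sum.inr (Sum.inr j), notMid_bot j,
        Relation.EqvGen.trans _ (Sum.inr (Sum.inl a)) _ ?_ ?_⟩
      · exact Relation.EqvGen.rel _ _
          (edge_first (gammaL U) δ (u := Sum.inr z) (v := Sum.inr a)
            (iff_of_true hz haU))
      · exact Relation.EqvGen.rel _ _
          (edge_second (gammaL U) δ (u := Sum.inl a) (v := Sum.inr j) ha)
    · exact ⟨Sum.inl z, notMid_top z,
        Relation.EqvGen.rel _ _
          (edge_first (gammaL U) δ (u := Sum.inr z) (v := Sum.inl z)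
            (iff_of_false hz not_false))⟩

/-- Case L2: `U` is not `ker δ`-saturated. -/
private lemma left_unsat (U : Set (Fin n)) (δ : PM n) (z₀ w₀ : Fin n)
    (hzw : δ.r (Sum.inl z₀) (Sum.inl w₀)) (hz : z₀ ∈ U) (hw : w₀ ∉ U)
    (hA : ∃ a j : Fin n, δ.r (Sum.inl a) (Sum.inr j)) :
    rnk (pmul (gammaL U) δ) = 1 ∧ Phi (gammaL U) δ = 0 := by
  -- convenient single edges
  have etop : ∀ m : Fin n, m ∉ U →
      conn (gammaL U) δ (Sum.inl m) (Sum.inr (Sum.inl m)) := fun m hm =>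
    Relation.EqvGen.rel _ _
      (edge_first (gammaL U) δ (u := Sum.inl m) (v := Sum.inr m)
        (iff_of_false not_false hm))
  have emid : ∀ a b : Fin n, a ∈ U → b ∈ U →
      conn (gammaL U) δ (Sum.inr (Sum.inl a)) (Sum.inr (Sum.inl b)) := fun a b ha hb =>
    Relation.EqvGen.rel _ _
      (edge_first (gammaL U) δ (u := Sum.inr a) (v := Sum.inr b) (iff_of_true ha hb))
  have eker : ∀ a b : Fin n, δ.r (Sum.inl a) (Sum.inl b) →
      conn (gammaL U) δ (Sum.inr (Sum.inl a)) (Sum.inr (Sum.inl b)) := fun a b h =>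
    Relation.EqvGen.rel _ _ (edge_second (gammaL U) δ (u := Sum.inl a) (v := Sum.inl b) h)
  have ebot : ∀ a j : Fin n, δ.r (Sum.inl a) (Sum.inr j) →
      conn (gammaL U) δ (Sum.inr (Sum.inl a)) (Sum.inr (Sum.inr j)) := fun a j h =>
    Relation.EqvGen.rel _ _ (edge_second (gammaL U) δ (u := Sum.inl a) (v := Sum.inr j) h)
  have mid_to_top : ∀ m : Fin n, m ∈ U →
      conn (gammaL U) δ (Sum.inr (Sum.inl m)) (Sum.inl w₀) := by
    intro m hm
    refine Relation.EqvGen.trans _ (Sum.inr (Sum.inl z₀)) _ (emid m z₀ hm hz) ?_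
    refine Relation.EqvGen.trans _ (Sum.inr (Sum.inl w₀)) _ (eker z₀ w₀ hzw) ?_
    exact Relation.EqvGen.symm _ _ (etop w₀ hw)
  constructor
  · obtain ⟨a, j, ha⟩ := hA
    have huniq : ∀ i i' : Fin n, (pmul (gammaL U) δ).r (Sum.inl i) (Sum.inl i') :=
      fun i i' => Relation.EqvGen.rel _ _
        (edge_first (gammaL U) δ (u := Sum.inl i) (v := Sum.inl i') Iff.rfl)
    by_cases haU : a ∈ U
    · refine rnk_eq_one_top _ w₀ j ?_ huniq
      show conn (gammaL U) δ (Sum.inl w₀) (Sum.inr (Sum.inr j))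
      refine Relation.EqvGen.trans _ (Sum.inr (Sum.inl a)) _ ?_ (ebot a j ha)
      exact Relation.EqvGen.symm _ _ (mid_to_top a haU)
    · refine rnk_eq_one_top _ a j ?_ huniq
      show conn (gammaL U) δ (Sum.inl a) (Sum.inr (Sum.inr j))
      exact Relation.EqvGen.trans _ (Sum.inr (Sum.inl a)) _ (etop a haU) (ebot a j ha)
  · apply Phi_eq_zero
    intro m
    by_cases hm : m ∈ U
    · exact ⟨Sum.inl w₀, notMid_top w₀, mid_to_top m hm⟩
    · exact ⟨Sum.inl m, notMid_top m, Relation.EqvGen.symm _ _ (etop m hm)⟩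

/-- Case R1: `U` is `coker δ`-saturated and contains the codomain class. -/
private lemma right_sat (U : Set (Fin n)) (δ : PM n)
    (hsat : ∀ z w, δ.r (Sum.inr z) (Sum.inr w) → (z ∈ U ↔ w ∈ U))
    (hdom : ∀ j z, δ.r (Sum.inl j) (Sum.inr z) → z ∈ U)
    (hA : ∃ j a : Fin n, δ.r (Sum.inl j) (Sum.inr a)) :
    rnk (pmul δ (gammaR U)) = 0 ∧ Phi δ (gammaR U) = 0 := by
  have hinv : ∀ x y, graphRel δ (gammaR U) x y → (hInvR U x ↔ hInvR U y) := by
    rintro x y (⟨u, v, hr, rfl, rfl⟩ | ⟨u, v, hr, rfl, rfl⟩)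
    · rcases u with i | z <;> rcases v with i' | z'
      · exact Iff.rfl
      · exact iff_of_true trivial (hdom i z' hr)
      · exact iff_of_true (hdom i' z (δ.iseqv.symm hr)) trivial
      · exact hsat z z' hr
    · rcases u with z | j <;> rcases v with z' | j' <;>
        first | exact Iff.rfl | exact hr
  constructor
  · apply rnk_eq_zero
    intro i j hc
    exact (conn_inv δ (gammaR U) (hInvR U) hinv _ _ hc).mp trivial
  · apply Phi_eq_zero
    intro z
    by_cases hz : z ∈ U
    · obtain ⟨j, a, ha⟩ := hA
      have haU : a ∈ U := hdom j a ha
      refine ⟨Sum.inl j, notMid_top j,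
        Relation.EqvGen.trans _ (Sum.inr (Sum.inl a)) _ ?_ ?_⟩
      · exact Relation.EqvGen.rel _ _
          (edge_second δ (gammaR U) (u := Sum.inl z) (v := Sum.inl a)
            (iff_of_true hz haU))
      · exact Relation.EqvGen.rel _ _
          (edge_first δ (gammaR U) (u := Sum.inr a) (v := Sum.inl j) (δ.iseqv.symm ha))
    · exact ⟨Sum.inr (Sum.inr z), notMid_bot z,
        Relation.EqvGen.rel _ _
          (edge_second δ (gammaR U) (u := Sum.inl z) (v := Sum.inr z)
            (iff_of_false hz not_false))⟩

/-- Case R2: `U` is not `coker δ`-saturated. -/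
private lemma right_unsat (U : Set (Fin n)) (δ : PM n) (z₀ w₀ : Fin n)
    (hzw : δ.r (Sum.inr z₀) (Sum.inr w₀)) (hz : z₀ ∈ U) (hw : w₀ ∉ U)
    (hA : ∃ j a : Fin n, δ.r (Sum.inl j) (Sum.inr a)) :
    rnk (pmul δ (gammaR U)) = 1 ∧ Phi δ (gammaR U) = 0 := by
  have ebot : ∀ m : Fin n, m ∉ U →
      conn δ (gammaR U) (Sum.inr (Sum.inl m)) (Sum.inr (Sum.inr m)) := fun m hm =>
    Relation.EqvGen.rel _ _
      (edge_second δ (gammaR U) (u := Sum.inl m) (v := Sum.inr m)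
        (iff_of_false hm not_false))
  have emid : ∀ a b : Fin n, a ∈ U → b ∈ U →
      conn δ (gammaR U) (Sum.inr (Sum.inl a)) (Sum.inr (Sum.inl b)) := fun a b ha hb =>
    Relation.EqvGen.rel _ _
      (edge_second δ (gammaR U) (u := Sum.inl a) (v := Sum.inl b) (iff_of_true ha hb))
  have ecok : ∀ a b : Fin n, δ.r (Sum.inr a) (Sum.inr b) →
      conn δ (gammaR U) (Sum.inr (Sum.inl a)) (Sum.inr (Sum.inl b)) := fun a b h =>
    Relation.EqvGen.rel _ _ (edge_first δ (gammaR U) (u := Sum.inr a) (v := Sum.inr b) h)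
  have etop : ∀ j a : Fin n, δ.r (Sum.inl j) (Sum.inr a) →
      conn δ (gammaR U) (Sum.inl j) (Sum.inr (Sum.inl a)) := fun j a h =>
    Relation.EqvGen.rel _ _ (edge_first δ (gammaR U) (u := Sum.inl j) (v := Sum.inr a) h)
  have mid_to_bot : ∀ m : Fin n, m ∈ U →
      conn δ (gammaR U) (Sum.inr (Sum.inl m)) (Sum.inr (Sum.inr w₀)) := by
    intro m hm
    refine Relation.EqvGen.trans _ (Sum.inr (Sum.inl z₀)) _ (emid m z₀ hm hz) ?_
    exact Relation.EqvGen.trans _ (Sum.inr (Sum.inl w₀)) _ (ecok z₀ w₀ hzw) (ebot w₀ hw)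
  constructor
  · obtain ⟨j, a, ha⟩ := hA
    have huniq : ∀ i i' : Fin n, (pmul δ (gammaR U)).r (Sum.inr i) (Sum.inr i') :=
      fun i i' => Relation.EqvGen.rel _ _
        (edge_second δ (gammaR U) (u := Sum.inr i) (v := Sum.inr i') Iff.rfl)
    by_cases haU : a ∈ U
    · refine rnk_eq_one_bot _ j w₀ ?_ huniq
      show conn δ (gammaR U) (Sum.inl j) (Sum.inr (Sum.inr w₀))
      exact Relation.EqvGen.trans _ (Sum.inr (Sum.inl a)) _ (etop j a ha)
        (mid_to_bot a haU)
    · refine rnk_eq_one_bot _ j a ?_ huniq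
      show conn δ (gammaR U) (Sum.inl j) (Sum.inr (Sum.inr a))
      exact Relation.EqvGen.trans _ (Sum.inr (Sum.inl a)) _ (etop j a ha) (ebot a haU)
  · apply Phi_eq_zero
    intro m
    by_cases hm : m ∈ U
    · exact ⟨Sum.inr (Sum.inr w₀), notMid_bot w₀, mid_to_bot m hm⟩
    · exact ⟨Sum.inr (Sum.inr m), notMid_bot m, ebot m hm⟩

/-- Separating set for different kernels. -/
private lemma exists_sep_ker (α β : PM n) (hβ : rnk β = 1) (x y : Fin n)
    (hxyα : α.r (Sum.inl x) (Sum.inl y)) (hxyβ : ¬ β.r (Sum.inl x) (Sum.inl y)) :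
    ∃ U : Set (Fin n),
      (∀ z w, β.r (Sum.inl z) (Sum.inl w) → (z ∈ U ↔ w ∈ U)) ∧
      (∀ z j, β.r (Sum.inl z) (Sum.inr j) → z ∈ U) ∧
      (∃ z w, α.r (Sum.inl z) (Sum.inl w) ∧ z ∈ U ∧ w ∉ U) := by
  classical
  set B : Set (Fin n) := {u | ∃ j, β.r (Sum.inl u) (Sum.inr j)} with hB
  have hBsat : ∀ z w, β.r (Sum.inl z) (Sum.inl w) → (z ∈ B ↔ w ∈ B) := by
    intro z w hzw
    constructor
    · rintro ⟨j, hj⟩; exact ⟨j, β.iseqv.trans (β.iseqv.symm hzw) hj⟩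
    · rintro ⟨j, hj⟩; exact ⟨j, β.iseqv.trans hzw hj⟩
  by_cases hx : x ∈ B <;> by_cases hy : y ∈ B
  · obtain ⟨jx, hjx⟩ := hx
    obtain ⟨jy, hjy⟩ := hy
    exact absurd (transversal_unique β hβ hjx hjy) hxyβ
  · exact ⟨B, hBsat, fun z j h => ⟨j, h⟩, x, y, hxyα, hx, hy⟩
  · exact ⟨B, hBsat, fun z j h => ⟨j, h⟩, y, x, α.iseqv.symm hxyα, hy, hx⟩
  · refine ⟨B ∪ {u | β.r (Sum.inl u) (Sum.inl x)}, ?_, fun z j h => Or.inl ⟨j, h⟩,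
      x, y, hxyα, Or.inr (β.iseqv.refl _), ?_⟩
    · intro z w hzw
      constructor
      · rintro (hzB | hzx)
        · exact Or.inl ((hBsat z w hzw).mp hzB)
        · exact Or.inr (β.iseqv.trans (β.iseqv.symm hzw) hzx)
      · rintro (hwB | hwx)
        · exact Or.inl ((hBsat z w hzw).mpr hwB)
        · exact Or.inr (β.iseqv.trans hzw hwx)
    · rintro (hyB | hyx)
      · exact hy hyB
      · exact hxyβ (β.iseqv.symm hyx)

/-- Separating set for different cokernels. -/
private lemma exists_sep_coker (α β : PM n) (hβ : rnk β = 1) (x y : Fin n)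
    (hxyα : α.r (Sum.inr x) (Sum.inr y)) (hxyβ : ¬ β.r (Sum.inr x) (Sum.inr y)) :
    ∃ U : Set (Fin n),
      (∀ z w, β.r (Sum.inr z) (Sum.inr w) → (z ∈ U ↔ w ∈ U)) ∧
      (∀ j z, β.r (Sum.inl j) (Sum.inr z) → z ∈ U) ∧
      (∃ z w, α.r (Sum.inr z) (Sum.inr w) ∧ z ∈ U ∧ w ∉ U) := by
  classical
  set B : Set (Fin n) := {u | ∃ j, β.r (Sum.inl j) (Sum.inr u)} with hB
  have hBsat : ∀ z w, β.r (Sum.inr z) (Sum.inr w) → (z ∈ B ↔ w ∈ B) := by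
    intro z w hzw
    constructor
    · rintro ⟨j, hj⟩; exact ⟨j, β.iseqv.trans hj hzw⟩
    · rintro ⟨j, hj⟩; exact ⟨j, β.iseqv.trans hj (β.iseqv.symm hzw)⟩
  by_cases hx : x ∈ B <;> by_cases hy : y ∈ B
  · obtain ⟨jx, hjx⟩ := hx
    obtain ⟨jy, hjy⟩ := hy
    have := transversal_unique β hβ hjx hjy
    exact absurd (β.iseqv.trans (β.iseqv.symm hjx)
      (β.iseqv.trans this hjy)) hxyβ
  · exact ⟨B, hBsat, fun j z h => ⟨j, h⟩, x, y, hxyα, hx, hy⟩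
  · exact ⟨B, hBsat, fun j z h => ⟨j, h⟩, y, x, α.iseqv.symm hxyα, hy, hx⟩
  · refine ⟨B ∪ {u | β.r (Sum.inr u) (Sum.inr x)}, ?_, fun j z h => Or.inl ⟨j, h⟩,
      x, y, hxyα, Or.inr (β.iseqv.refl _), ?_⟩
    · intro z w hzw
      constructor
      · rintro (hzB | hzx)
        · exact Or.inl ((hBsat z w hzw).mp hzB)
        · exact Or.inr (β.iseqv.trans (β.iseqv.symm hzw) hzx)
      · rintro (hwB | hwx)
        · exact Or.inl ((hBsat z w hzw).mpr hwB)
        · exact Or.inr (β.iseqv.trans hzw hwx)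
    · rintro (hyB | hyx)
      · exact hy hyB
      · exact hxyβ (β.iseqv.symm hyx)

end Statement10
/-- For `α, β ∈ D_1`: if `ker α ≠ ker β` there is `γ` with
`rank(γα) ≠ rank(γβ)` and `Φ(γ,α) = Φ(γ,β) = 0`; dually for cokernels. -/
theorem kernel_separation (n : ℕ) (hn : 1 ≤ n) (α β : PM n)
    (hα : rnk α = 1) (hβ : rnk β = 1) :
    ((fun x y : Fin n => α.r (Sum.inl x) (Sum.inl y)) ≠
        (fun x y : Fin n => β.r (Sum.inl x) (Sum.inl y)) →
      ∃ γ : PM n, rnk (pmul γ α) ≠ rnk (pmul γ β) ∧ Phi γ α = 0 ∧ Phi γ β = 0) ∧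
    ((fun x y : Fin n => α.r (Sum.inr x) (Sum.inr y)) ≠
        (fun x y : Fin n => β.r (Sum.inr x) (Sum.inr y)) →
      ∃ γ : PM n, rnk (pmul α γ) ≠ rnk (pmul β γ) ∧ Phi α γ = 0 ∧ Phi β γ = 0) := by
  classical
  constructor
  · intro hne
    have hex : ∃ x y : Fin n,
        ¬ (α.r (Sum.inl x) (Sum.inl y) ↔ β.r (Sum.inl x) (Sum.inl y)) := by
      by_contra h
      push_neg at h
      exact hne (funext fun x => funext fun y => propext (h x y))
    obtain ⟨x, y, hxy⟩ := hex
    by_cases ha : α.r (Sum.inl x) (Sum.inl y) <;>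
      by_cases hb : β.r (Sum.inl x) (Sum.inl y)
    · exact absurd (iff_of_true ha hb) hxy
    · obtain ⟨U, hsat, hdom, z, w, hzw, hz, hw⟩ := exists_sep_ker α β hβ x y ha hb
      obtain ⟨h1, hφα⟩ := left_unsat U α z w hzw hz hw (exists_transversal α hα)
      obtain ⟨h0, hφβ⟩ := left_sat U β hsat hdom (exists_transversal β hβ)
      exact ⟨gammaL U, by rw [h1, h0]; exact one_ne_zero, hφα, hφβ⟩
    · obtain ⟨U, hsat, hdom, z, w, hzw, hz, hw⟩ := exists_sep_ker β α hα x y hb ha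
      obtain ⟨h1, hφβ⟩ := left_unsat U β z w hzw hz hw (exists_transversal β hβ)
      obtain ⟨h0, hφα⟩ := left_sat U α hsat hdom (exists_transversal α hα)
      exact ⟨gammaL U, by rw [h1, h0]; exact zero_ne_one, hφα, hφβ⟩
    · exact absurd (iff_of_false ha hb) hxy
  · intro hne
    have hex : ∃ x y : Fin n,
        ¬ (α.r (Sum.inr x) (Sum.inr y) ↔ β.r (Sum.inr x) (Sum.inr y)) := by
      by_contra h
      push_neg at h
      exact hne (funext fun x => funext fun y => propext (h x y))
    obtain ⟨x, y, hxy⟩ := hex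
    by_cases ha : α.r (Sum.inr x) (Sum.inr y) <;>
      by_cases hb : β.r (Sum.inr x) (Sum.inr y)
    · exact absurd (iff_of_true ha hb) hxy
    · obtain ⟨U, hsat, hdom, z, w, hzw, hz, hw⟩ := exists_sep_coker α β hβ x y ha hb
      obtain ⟨h1, hφα⟩ := right_unsat U α z w hzw hz hw (exists_transversal α hα)
      obtain ⟨h0, hφβ⟩ := right_sat U β hsat hdom (exists_transversal β hβ)
      exact ⟨gammaR U, by rw [h1, h0]; exact one_ne_zero, hφα, hφβ⟩
    · obtain ⟨U, hsat, hdom, z, w, hzw, hz, hw⟩ := exists_sep_coker β α hα x y hb ha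
      obtain ⟨h1, hφβ⟩ := right_unsat U β z w hzw hz hw (exists_transversal β hβ)
      obtain ⟨h0, hφα⟩ := right_sat U α hsat hdom (exists_transversal α hα)
      exact ⟨gammaR U, by rw [h1, h0]; exact zero_ne_one, hφα, hφβ⟩
    · exact absurd (iff_of_false ha hb) hxy

end TPM
end
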